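/- Let n ≥ 2 and 2 ≤ q ≤ n be integers, and let c₀, c₄ : {0, 1, …, 2q} → ℂ satisfy the reality condition c₀(k) = (−1)^{q+k}·conj(c₄(2q−k)) for all k. For each k define c₁(k), c₂(k), c₃(k) from c₀(k), c₄(k) by the formulas c₁ = √((q+2)(q−1))·((c₄ − c₀)·q(q+1) + 4c₀(n+3)²)/((n+3)·(2(n+4)(n+2) − (q+2)(q−1))), c₂ = 3(c₀ + c₄)·√((q+2)(q+1)q(q−1))/(2(n+3)² − q(q+1)), c₃ = √((q+2)(q−1))·((c₀ − c₄)·q(q+1) + 4c₄(n+3)²)/((n+3)·(2(n+4)(n+2) − (q+2)(q−1))). Then the remaining reality conditions hold automatically: c₁(k) = (−1)^{q+k}·conj(c₃(2q−k)) and c₂(k) = (−1)^{q+k}·conj(c₂(2q−k)) for all k ∈ {0,…,2q}. -/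
import Mathlib


/-- `√((q+2)(q−1))` as a complex number. -/
noncomputable def sqQA (q : ℕ) : ℂ := (Real.sqrt (((q : ℝ) + 2) * ((q : ℝ) - 1)) : ℝ)

/-- `√((q+2)(q+1)q(q−1))` as a complex number. -/
noncomputable def sqQC (q : ℕ) : ℂ :=
  (Real.sqrt (((q : ℝ) + 2) * ((q : ℝ) + 1) * (q : ℝ) * ((q : ℝ) - 1)) : ℝ)

/-- The coefficient `c₁` determined by `c₀, c₄`. -/
noncomputable def c1coef (n q : ℕ) (c0 c4 : ℂ) : ℂ :=
  sqQA q * ((c4 - c0) * (q : ℂ) * ((q : ℂ) + 1) + 4 * c0 * ((n : ℂ) + 3) ^ 2) /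
    (((n : ℂ) + 3) * (2 * ((n : ℂ) + 4) * ((n : ℂ) + 2) - ((q : ℂ) + 2) * ((q : ℂ) - 1)))

/-- The coefficient `c₂` determined by `c₀, c₄`. -/
noncomputable def c2coef (n q : ℕ) (c0 c4 : ℂ) : ℂ :=
  3 * (c0 + c4) * sqQC q / (2 * ((n : ℂ) + 3) ^ 2 - (q : ℂ) * ((q : ℂ) + 1))

/-- The coefficient `c₃` determined by `c₀, c₄`. -/
noncomputable def c3coef (n q : ℕ) (c0 c4 : ℂ) : ℂ :=
  sqQA q * ((c0 - c4) * (q : ℂ) * ((q : ℂ) + 1) + 4 * c4 * ((n : ℂ) + 3) ^ 2) /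
    (((n : ℂ) + 3) * (2 * ((n : ℂ) + 4) * ((n : ℂ) + 2) - ((q : ℂ) + 2) * ((q : ℂ) - 1)))

/-- Let `n ≥ 2`, `2 ≤ q ≤ n` and let `c₀, c₄ : {0,…,2q} → ℂ` satisfy the reality condition
`c₀(k) = (−1)^(q+k) conj(c₄(2q−k))`. With `c₁(k), c₂(k), c₃(k)` defined from `c₀(k), c₄(k)`
by the momentum-constraint formulas, the remaining reality conditions hold automatically:
`c₁(k) = (−1)^(q+k) conj(c₃(2q−k))` and `c₂(k) = (−1)^(q+k) conj(c₂(2q−k))` for all `k ≤ 2q`. -/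
theorem stmt_10 (n q : ℕ) (hn : 2 ≤ n) (hq2 : 2 ≤ q) (hqn : q ≤ n) (c0 c4 : ℕ → ℂ)
    (hreal : ∀ k ≤ 2 * q,
      c0 k = (-1 : ℂ) ^ (q + k) * (starRingEnd ℂ) (c4 (2 * q - k))) :
    ∀ k ≤ 2 * q,
      c1coef n q (c0 k) (c4 k)
          = (-1 : ℂ) ^ (q + k) * (starRingEnd ℂ) (c3coef n q (c0 (2 * q - k)) (c4 (2 * q - k))) ∧
      c2coef n q (c0 k) (c4 k)
          = (-1 : ℂ) ^ (q + k) * (starRingEnd ℂ) (c2coef n q (c0 (2 * q - k)) (c4 (2 * q - k))) := by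
  intro k hk
  have h1 := hreal k hk
  have h2' := hreal (2 * q - k) (Nat.sub_le _ _)
  rw [Nat.sub_sub_self hk] at h2'
  have hpar : (-1 : ℂ) ^ (q + (2 * q - k)) = (-1 : ℂ) ^ (q + k) := by
    rcases Nat.even_or_odd (q + k) with he | ho
    · have he2 : Even (q + (2 * q - k)) := by
        rcases he with ⟨m, hm⟩; exact ⟨2 * q - m, by omega⟩
      rw [he.neg_one_pow, he2.neg_one_pow]
    · have ho2 : Odd (q + (2 * q - k)) := by
        rcases ho with ⟨m, hm⟩; exact ⟨2 * q - m - 1, by omega⟩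
      rw [ho.neg_one_pow, ho2.neg_one_pow]
  rw [hpar] at h2'
  have hε2 : ((-1 : ℂ) ^ (q + k)) * ((-1 : ℂ) ^ (q + k)) = 1 := by
    rw [← mul_pow]; simp
  have h2 : c4 k = (-1 : ℂ) ^ (q + k) * (starRingEnd ℂ) (c0 (2 * q - k)) := by
    have := congrArg (starRingEnd ℂ) h2'
    simp only [map_mul, map_pow, map_neg, map_one, Complex.conj_conj] at this
    rw [this, ← mul_assoc, hε2, one_mul]
  rw [h1, h2]
  constructor
  · simp only [c1coef, c3coef, sqQA, map_div₀, map_mul, map_sub, map_add, map_pow,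
      Complex.conj_ofReal, map_natCast, map_ofNat, map_one]
    ring
  · simp only [c2coef, sqQC, map_div₀, map_mul, map_sub, map_add, map_pow,
      Complex.conj_ofReal, map_natCast, map_ofNat, map_one]
    ring
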